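/- arXiv:2601.15077 — 4 statements merged into one kernel-verified Lean document; each statement's English description precedes it below -/
import Mathlib

section
/- Let X be a real Hilbert space, let A₁, …, A_m be nonempty closed convex subsets of X with nonempty intersection A = ⋂ᵢ Aᵢ, and let T = P_{A_m} ∘ ⋯ ∘ P_{A₁} be the composition of the metric projections. Then the fixed-point set of T equals A: {x ∈ X : T(x) = x} = ⋂ᵢ Aᵢ. -/
/-- `P` is the metric (orthogonal) projection onto `C`: for every `x`, `P x` is the
point of `C` minimizing the distance to `x`. -/
def IsMetricProjection {X : Type*} [NormedAddCommGroup X] (C : Set X) (P : X → X) : Prop :=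
  ∀ x : X, P x ∈ C ∧ ∀ z ∈ C, ‖P x - x‖ ≤ ‖z - x‖

/-- Composition `P (m-1) ∘ ⋯ ∘ P 0` (i.e. `P 0` is applied first). -/
def compProj {X : Type*} {m : ℕ} (P : Fin m → X → X) : X → X :=
  fun x => (List.ofFn P).foldl (fun y f => f y) x

/-!
A projection onto a convex set `C` is firmly quasi-nonexpansive towards every `a ∈ C`:
`‖P y - a‖² + ‖P y - y‖² ≤ ‖y - a‖²`. Fix a common point `a` of all the sets. Along the
orbit of a fixed point `x` of the composition the distance to `a` never increases and returns
to `‖x - a‖`, so it is constant; the firm inequality then forces every step to have zero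
displacement, i.e. `x` is fixed by every projection, hence lies in every set.
-/

open scoped RealInnerProductSpace

section FirmlyQuasiNonexpansive

variable {X : Type*} [NormedAddCommGroup X]

def IsFirmlyQuasiNonexpansiveAt (f : X → X) (a : X) : Prop :=
  ∀ y, ‖f y - a‖ ^ 2 + ‖f y - y‖ ^ 2 ≤ ‖y - a‖ ^ 2

namespace IsFirmlyQuasiNonexpansiveAt

variable {f : X → X} {a : X}

theorem norm_sub_le (hf : IsFirmlyQuasiNonexpansiveAt f a) (y : X) : ‖f y - a‖ ≤ ‖y - a‖ :=
  (sq_le_sq₀ (norm_nonneg _) (norm_nonneg _)).mp <|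
    le_of_add_le_of_nonneg_left (hf y) (sq_nonneg _)

theorem apply_eq_self_of_norm_sub_le (hf : IsFirmlyQuasiNonexpansiveAt f a) {y : X}
    (hy : ‖y - a‖ ≤ ‖f y - a‖) : f y = y := by
  have hsq : ‖f y - y‖ ^ 2 ≤ 0 := by nlinarith [hf y, norm_nonneg (y - a)]
  rw [← sub_eq_zero, ← norm_eq_zero]
  exact pow_eq_zero_iff two_ne_zero |>.mp (le_antisymm hsq (sq_nonneg _))

end IsFirmlyQuasiNonexpansiveAt

variable {a : X} {L : List (X → X)}

theorem norm_foldl_sub_le (hL : ∀ f ∈ L, IsFirmlyQuasiNonexpansiveAt f a) (y : X) :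
    ‖L.foldl (fun z f => f z) y - a‖ ≤ ‖y - a‖ := by
  induction L generalizing y with
  | nil => rfl
  | cons f L ih =>
    rw [List.forall_mem_cons] at hL
    exact (ih hL.2 (f y)).trans (hL.1.norm_sub_le y)

theorem forall_apply_eq_self_of_foldl_eq_self (hL : ∀ f ∈ L, IsFirmlyQuasiNonexpansiveAt f a)
    {x : X} (hx : L.foldl (fun z f => f z) x = x) : ∀ f ∈ L, f x = x := by
  induction L with
  | nil => simp
  | cons f L ih =>
    rw [List.forall_mem_cons] at hL
    rw [List.foldl_cons] at hx
    have hfx : f x = x := hL.1.apply_eq_self_of_norm_sub_le <| by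
      simpa only [hx] using norm_foldl_sub_le hL.2 (f x)
    rw [hfx] at hx
    exact List.forall_mem_cons.mpr ⟨hfx, ih hL.2 hx⟩

end FirmlyQuasiNonexpansive

theorem List.foldl_eq_self_of_forall_apply_eq_self {α : Type*} {L : List (α → α)} {x : α}
    (hL : ∀ f ∈ L, f x = x) : L.foldl (fun z f => f z) x = x := by
  induction L with
  | nil => rfl
  | cons f L ih =>
    rw [List.forall_mem_cons] at hL
    rw [List.foldl_cons, hL.1]
    exact ih hL.2

namespace IsMetricProjection

variable {X : Type*} [NormedAddCommGroup X] {C : Set X} {P : X → X}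

theorem apply_eq_self_iff (hP : IsMetricProjection C P) {x : X} : P x = x ↔ x ∈ C := by
  refine ⟨fun hx => hx ▸ (hP x).1, fun hx => ?_⟩
  rw [← sub_eq_zero, ← norm_le_zero_iff]
  simpa using (hP x).2 x hx

theorem norm_sub_eq_iInf (hP : IsMetricProjection C P) (y : X) :
    ‖y - P y‖ = ⨅ w : C, ‖y - w‖ := by
  have : Nonempty C := ⟨⟨P y, (hP y).1⟩⟩
  have hbdd : BddBelow (Set.range fun w : C => ‖y - w‖) :=
    ⟨0, Set.forall_mem_range.mpr fun _ => norm_nonneg _⟩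
  refine le_antisymm (le_ciInf fun w => ?_) (ciInf_le hbdd ⟨P y, (hP y).1⟩)
  simpa only [norm_sub_rev y] using (hP y).2 w w.2

variable [InnerProductSpace ℝ X]

theorem isFirmlyQuasiNonexpansiveAt (hP : IsMetricProjection C P) (hC : Convex ℝ C) {a : X}
    (ha : a ∈ C) : IsFirmlyQuasiNonexpansiveAt P a := by
  intro y
  have hvar : ⟪y - P y, a - P y⟫ ≤ 0 :=
    (norm_eq_iInf_iff_real_inner_le_zero hC (hP y).1).mp (hP.norm_sub_eq_iInf y) a ha
  have hexpand : ‖y - a‖ ^ 2 = ‖y - P y‖ ^ 2 - 2 * ⟪y - P y, a - P y⟫ + ‖P y - a‖ ^ 2 := by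
    rw [← sub_add_sub_cancel y (P y) a, norm_add_sq_real, ← neg_sub a (P y), inner_neg_right]
    ring
  rw [norm_sub_rev (P y) y]
  linarith

end IsMetricProjection

theorem fixedPointSet_of_composed_projections_general
    {X : Type*} [NormedAddCommGroup X] [InnerProductSpace ℝ X]
    {m : ℕ} (A : Fin m → Set X) (P : Fin m → X → X)
    (hcv : ∀ i, Convex ℝ (A i))
    (hinter : (⋂ i, A i).Nonempty)
    (hP : ∀ i, IsMetricProjection (A i) (P i)) :
    {x : X | compProj P x = x} = ⋂ i, A i := by
  obtain ⟨a, ha⟩ := hinter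
  have hfirm : ∀ f ∈ List.ofFn P, IsFirmlyQuasiNonexpansiveAt f a :=
    List.forall_mem_ofFn_iff.mpr fun i =>
      (hP i).isFirmlyQuasiNonexpansiveAt (hcv i) (Set.mem_iInter.mp ha i)
  ext x
  have hfix : ∀ i, P i x = x ↔ x ∈ A i := fun i => (hP i).apply_eq_self_iff
  simp only [Set.mem_ofPred_eq, Set.mem_iInter, ← hfix]
  constructor
  · intro hx i
    exact forall_apply_eq_self_of_foldl_eq_self hfirm hx (P i) (List.mem_ofFn.mpr ⟨i, rfl⟩)
  · intro hx
    exact List.foldl_eq_self_of_forall_apply_eq_self (List.forall_mem_ofFn_iff.mpr hx)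

/-- The fixed-point set of the composed projection operator equals the intersection
of the constraint sets. -/
theorem fixedPointSet_of_composed_projections
    {X : Type*} [NormedAddCommGroup X] [InnerProductSpace ℝ X] [CompleteSpace X]
    {m : ℕ} (A : Fin m → Set X) (P : Fin m → X → X)
    (hne : ∀ i, (A i).Nonempty) (hcl : ∀ i, IsClosed (A i)) (hcv : ∀ i, Convex ℝ (A i))
    (hinter : (⋂ i, A i).Nonempty)
    (hP : ∀ i, IsMetricProjection (A i) (P i)) :
    {x : X | compProj P x = x} = ⋂ i, A i :=
  fixedPointSet_of_composed_projections_general A P hcv hinter hP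
end

section
/- Let X be a real Hilbert space, let A₁, …, A_m be nonempty closed convex subsets of X with nonempty intersection A = ⋂ᵢ Aᵢ, let T = P_{A_m} ∘ ⋯ ∘ P_{A₁}, and let x⁽ᵏ⁺¹⁾ = T(x⁽ᵏ⁾) for an arbitrary initial point x⁽⁰⁾ ∈ X. Then every weak cluster point of the sequence (x⁽ᵏ⁾) lies in A; that is, if a subsequence x⁽ᵏ ⱼ⁾ converges weakly to some x* ∈ X, then x* ∈ ⋂ᵢ Aᵢ. -/
open scoped RealInnerProductSpace
open Filter Topology

namespace IsMetricProjection

variable {X : Type*} [NormedAddCommGroup X] [InnerProductSpace ℝ X] {C : Set X} {P : X → X}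

theorem inner_sub_le_zero (hC : Convex ℝ C) (hP : IsMetricProjection C P) (x : X) {a : X}
    (ha : a ∈ C) : ⟪x - P x, a - P x⟫ ≤ 0 := by
  have : Nonempty C := ⟨⟨a, ha⟩⟩
  refine (norm_eq_iInf_iff_real_inner_le_zero hC (hP x).1).1 ?_ a ha
  refine le_antisymm (le_ciInf fun w => ?_) (ciInf_le ⟨0, ?_⟩ (⟨P x, (hP x).1⟩ : C))
  · rw [norm_sub_rev, norm_sub_rev x]
    exact (hP x).2 w w.2
  · rintro _ ⟨w, rfl⟩
    exact norm_nonneg _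

theorem norm_sub_sq_add_norm_sub_sq_le (hC : Convex ℝ C) (hP : IsMetricProjection C P) (x : X)
    {a : X} (ha : a ∈ C) : ‖P x - x‖ ^ 2 + ‖P x - a‖ ^ 2 ≤ ‖x - a‖ ^ 2 := by
  have hangle := hP.inner_sub_le_zero hC x ha
  have hneg : ⟪x - P x, P x - a⟫ = -⟪x - P x, a - P x⟫ := by rw [← inner_neg_right, neg_sub]
  rw [show x - a = (x - P x) + (P x - a) by abel, norm_add_sq_real, norm_sub_rev x]
  linarith

theorem mem_of_tendsto_inner (hC : Convex ℝ C) (hP : IsMetricProjection C P) {z : ℕ → X}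
    (hz : ∀ n, z n ∈ C) {x : X} (hzx : ∀ y, Tendsto (fun n => ⟪z n, y⟫) atTop (𝓝 ⟪x, y⟫)) :
    x ∈ C := by
  by_contra hx
  have hlim := (hzx (x - P x)).sub_const ⟪P x, x - P x⟫
  simp only [← inner_sub_left] at hlim
  have hsep : ⟪x - P x, x - P x⟫ ≤ 0 :=
    le_of_tendsto' hlim fun n => by
      rw [real_inner_comm]
      exact hP.inner_sub_le_zero hC x (hz n)
  exact hx (sub_eq_zero.1 (real_inner_self_nonpos.1 hsep) ▸ (hP x).1)

end IsMetricProjection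

/-- `partialCompProj P n` applies `P 0, …, P (n - 1)` in turn (only the `P i` with `i < m`
exist, so it is constant in `n ≥ m`). -/
def partialCompProj {X : Type*} {m : ℕ} (P : Fin m → X → X) : ℕ → X → X
  | 0, x => x
  | n + 1, x => if h : n < m then P ⟨n, h⟩ (partialCompProj P n x) else partialCompProj P n x

section PartialCompProj

variable {X : Type*} {m : ℕ} (P : Fin m → X → X)

@[simp]
theorem partialCompProj_zero (x : X) : partialCompProj P 0 x = x := rfl

theorem partialCompProj_succ (i : Fin m) (x : X) :
    partialCompProj P (i + 1) x = P i (partialCompProj P i x) := by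
  simp [partialCompProj, i.isLt]

theorem partialCompProj_succ_of_le {n : ℕ} (hn : m ≤ n) (x : X) :
    partialCompProj P (n + 1) x = partialCompProj P n x := by
  simp [partialCompProj, Nat.not_lt.2 hn]

theorem partialCompProj_eq_foldl_take (n : ℕ) (x : X) :
    partialCompProj P n x = ((List.ofFn P).take n).foldl (fun y f => f y) x := by
  induction n with
  | zero => rfl
  | succ n ih =>
    rcases Nat.lt_or_ge n m with h | h
    · rw [partialCompProj_succ P ⟨n, h⟩, List.take_add_one,
        List.getElem?_eq_getElem (by simpa using h), List.foldl_append]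
      simp [ih, List.getElem_ofFn]
    · rw [partialCompProj_succ_of_le P h, ih, List.take_of_length_le (by simpa using h),
        List.take_of_length_le (by simp; omega)]

theorem compProj_eq_partialCompProj (x : X) : compProj P x = partialCompProj P m x := by
  rw [partialCompProj_eq_foldl_take, List.take_of_length_le (by simp), compProj]

end PartialCompProj

section Fejer

variable {X : Type*} [NormedAddCommGroup X] [InnerProductSpace ℝ X] {m : ℕ} {A : Fin m → Set X}
  {P : Fin m → X → X} (hcv : ∀ i, Convex ℝ (A i)) (hP : ∀ i, IsMetricProjection (A i) (P i))
  {a : X} (ha : ∀ i, a ∈ A i)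
include hcv hP ha

theorem norm_partialCompProj_succ_sub_sq_add_le (u : X) (n : ℕ) :
    ‖partialCompProj P (n + 1) u - partialCompProj P n u‖ ^ 2
      + ‖partialCompProj P (n + 1) u - a‖ ^ 2 ≤ ‖partialCompProj P n u - a‖ ^ 2 := by
  rcases Nat.lt_or_ge n m with h | h
  · rw [partialCompProj_succ P ⟨n, h⟩]
    exact (hP _).norm_sub_sq_add_norm_sub_sq_le (hcv _) _ (ha _)
  · simp [partialCompProj_succ_of_le P h]

theorem antitone_norm_partialCompProj_sub_sq (u : X) :
    Antitone fun n => ‖partialCompProj P n u - a‖ ^ 2 :=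
  antitone_nat_of_succ_le fun n => by
    linarith [norm_partialCompProj_succ_sub_sq_add_le hcv hP ha u n,
      sq_nonneg ‖partialCompProj P (n + 1) u - partialCompProj P n u‖]

theorem norm_partialCompProj_succ_sub_sq_le (u : X) (n : ℕ) :
    ‖partialCompProj P (n + 1) u - partialCompProj P n u‖ ^ 2
      ≤ ‖u - a‖ ^ 2 - ‖partialCompProj P m u - a‖ ^ 2 := by
  have hanti := antitone_norm_partialCompProj_sub_sq hcv hP ha u
  rcases Nat.lt_or_ge n m with h | h
  · have hstart : ‖partialCompProj P n u - a‖ ^ 2 ≤ ‖u - a‖ ^ 2 := hanti n.zero_le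
    linarith [norm_partialCompProj_succ_sub_sq_add_le hcv hP ha u n, hanti h]
  · rw [partialCompProj_succ_of_le P h, sub_self, norm_zero, sq, zero_mul, sub_nonneg]
    exact hanti m.zero_le

end Fejer

theorem Antitone.tendsto_sub_succ {D : ℕ → ℝ} (hD : Antitone D) (hbdd : BddBelow (Set.range D)) :
    Tendsto (fun k => D k - D (k + 1)) atTop (𝓝 0) := by
  have hlim := tendsto_atTop_ciInf hD hbdd
  simpa using hlim.sub (hlim.comp (tendsto_add_atTop_nat 1))

theorem tendsto_inner_of_tendsto_norm_sub {X : Type*} [NormedAddCommGroup X]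
    [InnerProductSpace ℝ X] {l : Filter ℕ} {z x : ℕ → X} {y : X} {c : ℝ}
    (hzx : Tendsto (fun n => ‖z n - x n‖) l (𝓝 0)) (hx : Tendsto (fun n => ⟪x n, y⟫) l (𝓝 c)) :
    Tendsto (fun n => ⟪z n, y⟫) l (𝓝 c) := by
  have hdiff : Tendsto (fun n => ⟪z n - x n, y⟫) l (𝓝 0) :=
    squeeze_zero_norm (fun n => abs_real_inner_le_norm _ _) (by simpa using hzx.mul_const ‖y‖)
  simpa [inner_sub_left] using hdiff.add hx

section AsymptoticRegularity

variable {X : Type*} [NormedAddCommGroup X] [InnerProductSpace ℝ X] {m : ℕ} {A : Fin m → Set X}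
  {P : Fin m → X → X} (hcv : ∀ i, Convex ℝ (A i)) (hP : ∀ i, IsMetricProjection (A i) (P i))
  {a : X} (ha : ∀ i, a ∈ A i) {x : ℕ → X} (hx : ∀ k, x (k + 1) = compProj P (x k))
include hcv hP ha hx

theorem tendsto_norm_partialCompProj_succ_sub (n : ℕ) :
    Tendsto (fun k => ‖partialCompProj P (n + 1) (x k) - partialCompProj P n (x k)‖)
      atTop (𝓝 0) := by
  set D : ℕ → ℝ := fun k => ‖x k - a‖ ^ 2
  have hstep : ∀ k, D (k + 1) = ‖partialCompProj P m (x k) - a‖ ^ 2 := fun k => by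
    simp only [D, hx, compProj_eq_partialCompProj]
  have hD : Antitone D := antitone_nat_of_succ_le fun k => by
    rw [hstep]
    exact antitone_norm_partialCompProj_sub_sq hcv hP ha (x k) m.zero_le
  have hgap : ∀ k, ‖partialCompProj P (n + 1) (x k) - partialCompProj P n (x k)‖
      ≤ √(D k - D (k + 1)) := fun k => by
    rw [hstep, ← Real.sqrt_sq (norm_nonneg _)]
    exact Real.sqrt_le_sqrt (norm_partialCompProj_succ_sub_sq_le hcv hP ha (x k) n)
  have hsqrt := (Real.continuous_sqrt.tendsto 0).comp (hD.tendsto_sub_succ ⟨0, ?_⟩)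
  · exact squeeze_zero (fun _ => norm_nonneg _) hgap (by simpa [Function.comp_def] using hsqrt)
  · rintro _ ⟨k, rfl⟩
    positivity

theorem tendsto_norm_partialCompProj_sub_self (n : ℕ) :
    Tendsto (fun k => ‖partialCompProj P n (x k) - x k‖) atTop (𝓝 0) := by
  induction n with
  | zero => simp
  | succ n ih =>
    refine squeeze_zero (fun _ => norm_nonneg _) (fun k => norm_sub_le_norm_sub_add_norm_sub _
      (partialCompProj P n (x k)) _) ?_
    simpa using (tendsto_norm_partialCompProj_succ_sub hcv hP ha hx n).add ih

end AsymptoticRegularity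

theorem weak_cluster_points_mem_intersection_general
    {X : Type*} [NormedAddCommGroup X] [InnerProductSpace ℝ X]
    {m : ℕ} (A : Fin m → Set X) (P : Fin m → X → X)
    (hcv : ∀ i, Convex ℝ (A i))
    (hinter : (⋂ i, A i).Nonempty)
    (hP : ∀ i, IsMetricProjection (A i) (P i))
    (x : ℕ → X) (hx : ∀ k : ℕ, x (k + 1) = compProj P (x k))
    (κ : ℕ → ℕ) (hκ : StrictMono κ) (xstar : X)
    (hweak : ∀ y : X,
      Filter.Tendsto (fun j => ⟪x (κ j), y⟫) Filter.atTop (nhds ⟪xstar, y⟫)) :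
    xstar ∈ ⋂ i, A i := by
  obtain ⟨a, ha⟩ := hinter
  rw [Set.mem_iInter] at ha ⊢
  intro i
  have hmem : ∀ j, partialCompProj P (i + 1) (x (κ j)) ∈ A i := fun j => by
    rw [partialCompProj_succ]
    exact (hP i _).1
  have hnear := (tendsto_norm_partialCompProj_sub_self hcv hP ha hx (i + 1)).comp hκ.tendsto_atTop
  exact (hP i).mem_of_tendsto_inner (hcv i) hmem fun y =>
    tendsto_inner_of_tendsto_norm_sub hnear (hweak y)

/-- Every weak cluster point of the iterates of the composed projection operator
lies in the intersection of the constraint sets. -/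
theorem weak_cluster_points_mem_intersection
    {X : Type*} [NormedAddCommGroup X] [InnerProductSpace ℝ X] [CompleteSpace X]
    {m : ℕ} (A : Fin m → Set X) (P : Fin m → X → X)
    (hne : ∀ i, (A i).Nonempty) (hcl : ∀ i, IsClosed (A i)) (hcv : ∀ i, Convex ℝ (A i))
    (hinter : (⋂ i, A i).Nonempty)
    (hP : ∀ i, IsMetricProjection (A i) (P i))
    (x : ℕ → X) (hx : ∀ k : ℕ, x (k + 1) = compProj P (x k))
    (κ : ℕ → ℕ) (hκ : StrictMono κ) (xstar : X)
    (hweak : ∀ y : X,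
      Filter.Tendsto (fun j => ⟪x (κ j), y⟫) Filter.atTop (nhds ⟪xstar, y⟫)) :
    xstar ∈ ⋂ i, A i :=
  weak_cluster_points_mem_intersection_general A P hcv hinter hP x hx κ hκ xstar hweak
end

section
/- Fix λ > 0 and define on ℝ² the three proximal maps prox_{λφ₁}(x) = ((x₁ + λ)/(1 + λ), x₂), prox_{λφ₂}(x) = (x₁, (x₂ + λ)/(1 + λ)), and prox_{λφ₃}(x) = x − (λ(x₁ + x₂ − 1)/(1 + 2λ))·(1, 1), associated with φ₁(x) = ½(x₁ − 1)², φ₂(x) = ½(x₂ − 1)², φ₃(x) = ½(x₁ + x₂ − 1)². Then the cyclic composition G = prox_{λφ₃} ∘ prox_{λφ₂} ∘ prox_{λφ₁} is a contraction on ℝ² (Lipschitz with constant strictly less than 1), and hence G has a unique fixed point. -/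
/-!
On differences, `P₂ ∘ P₁` is the homothety of ratio `1/(1+λ)`, while `P₃` subtracts
`t (d₀ + d₁) (1, 1)` with `t = λ/(1+2λ) ∈ [0, 1]`, which lowers the squared norm by
`2t(1-t)(d₀ + d₁)² ≥ 0`. So `G` is `1/(1+λ)`-Lipschitz, and Banach's fixed point theorem applies.
-/

theorem existsUnique_fixedPoint_of_dist_le_mul {α : Type*} [MetricSpace α] [Nonempty α]
    [CompleteSpace α] {f : α → α} {c : ℝ} (hc0 : 0 ≤ c) (hc1 : c < 1)
    (hf : ∀ x y, dist (f x) (f y) ≤ c * dist x y) : ∃! z, f z = z := by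
  have hcontr : ContractingWith ⟨c, hc0⟩ f :=
    ⟨by exact_mod_cast hc1, LipschitzWith.of_dist_le_mul hf⟩
  exact ⟨hcontr.fixedPoint f, hcontr.fixedPoint_isFixedPt, fun _ hz => hcontr.fixedPoint_unique hz⟩

theorem sq_sub_mul_add_add_sq_sub_mul_add_le {a b t : ℝ} (ht0 : 0 ≤ t) (ht1 : t ≤ 1) :
    (a - t * (a + b)) ^ 2 + (b - t * (a + b)) ^ 2 ≤ a ^ 2 + b ^ 2 := by
  have hdrop : 0 ≤ 2 * t * (1 - t) * (a + b) ^ 2 := by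
    have : 0 ≤ 1 - t := by linarith
    positivity
  have hexpand : (a - t * (a + b)) ^ 2 + (b - t * (a + b)) ^ 2
      = a ^ 2 + b ^ 2 - 2 * t * (1 - t) * (a + b) ^ 2 := by ring
  linarith

namespace EuclideanSpace

theorem norm_le_norm_of_sq_add_sq_le {u v : EuclideanSpace ℝ (Fin 2)}
    (h : u 0 ^ 2 + u 1 ^ 2 ≤ v 0 ^ 2 + v 1 ^ 2) : ‖u‖ ≤ ‖v‖ := by
  simp only [EuclideanSpace.norm_eq, Fin.sum_univ_two, Real.norm_eq_abs, sq_abs]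
  exact Real.sqrt_le_sqrt h

end EuclideanSpace

section CyclicProx

variable {lam : ℝ} {P₁ P₂ P₃ : EuclideanSpace ℝ (Fin 2) → EuclideanSpace ℝ (Fin 2)}

theorem prox_comp_prox_sub_eq_smul
    (hP₁ : ∀ x : EuclideanSpace ℝ (Fin 2), P₁ x 0 = (x 0 + lam) / (1 + lam) ∧ P₁ x 1 = x 1)
    (hP₂ : ∀ x : EuclideanSpace ℝ (Fin 2), P₂ x 0 = x 0 ∧ P₂ x 1 = (x 1 + lam) / (1 + lam))
    (x y : EuclideanSpace ℝ (Fin 2)) :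
    P₂ (P₁ x) - P₂ (P₁ y) = (1 + lam)⁻¹ • (x - y) := by
  ext i
  fin_cases i <;>
    simp only [PiLp.sub_apply, PiLp.smul_apply, smul_eq_mul, Fin.zero_eta, Fin.mk_one,
      (hP₂ _).1, (hP₂ _).2, (hP₁ x).1, (hP₁ y).1, (hP₁ x).2, (hP₁ y).2] <;>
    ring

theorem norm_prox_sub_le (hlam : 0 ≤ lam)
    (hP₃ : ∀ x : EuclideanSpace ℝ (Fin 2),
      P₃ x 0 = x 0 - lam * (x 0 + x 1 - 1) / (1 + 2 * lam) ∧
      P₃ x 1 = x 1 - lam * (x 0 + x 1 - 1) / (1 + 2 * lam))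
    (u v : EuclideanSpace ℝ (Fin 2)) : ‖P₃ u - P₃ v‖ ≤ ‖u - v‖ := by
  set t := lam / (1 + 2 * lam)
  have ht0 : 0 ≤ t := by positivity
  have ht1 : t ≤ 1 := (div_le_one (by linarith)).2 (by linarith)
  have hdiff : ∀ i, (P₃ u - P₃ v) i = (u - v) i - t * ((u - v) 0 + (u - v) 1) := by
    intro i
    fin_cases i <;>
      simp only [PiLp.sub_apply, Fin.zero_eta, Fin.mk_one, (hP₃ u).1, (hP₃ v).1, (hP₃ u).2,
        (hP₃ v).2, t] <;>
      ring
  apply EuclideanSpace.norm_le_norm_of_sq_add_sq_le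
  rw [hdiff 0, hdiff 1]
  exact sq_sub_mul_add_add_sq_sub_mul_add_le ht0 ht1

end CyclicProx

/-- For fixed `λ > 0`, the cyclic composition `G = prox_{λφ₃} ∘ prox_{λφ₂} ∘ prox_{λφ₁}`
of the three closed-form proximal maps is a contraction on `ℝ²` (Lipschitz with a
constant strictly less than 1), and hence has a unique fixed point. -/
theorem cyclic_prox_composition_is_contraction
    (lam : ℝ) (hlam : 0 < lam)
    (P₁ P₂ P₃ G : EuclideanSpace ℝ (Fin 2) → EuclideanSpace ℝ (Fin 2))
    (hP₁ : ∀ x : EuclideanSpace ℝ (Fin 2),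
      P₁ x 0 = (x 0 + lam) / (1 + lam) ∧ P₁ x 1 = x 1)
    (hP₂ : ∀ x : EuclideanSpace ℝ (Fin 2),
      P₂ x 0 = x 0 ∧ P₂ x 1 = (x 1 + lam) / (1 + lam))
    (hP₃ : ∀ x : EuclideanSpace ℝ (Fin 2),
      P₃ x 0 = x 0 - lam * (x 0 + x 1 - 1) / (1 + 2 * lam) ∧
      P₃ x 1 = x 1 - lam * (x 0 + x 1 - 1) / (1 + 2 * lam))
    (hG : ∀ x : EuclideanSpace ℝ (Fin 2), G x = P₃ (P₂ (P₁ x))) :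
    (∃ c : ℝ, 0 ≤ c ∧ c < 1 ∧
      ∀ x y : EuclideanSpace ℝ (Fin 2), ‖G x - G y‖ ≤ c * ‖x - y‖) ∧
    ∃! z : EuclideanSpace ℝ (Fin 2), G z = z := by
  have hc0 : 0 ≤ (1 + lam)⁻¹ := by positivity
  have hc1 : (1 + lam)⁻¹ < 1 := inv_lt_one_of_one_lt₀ (by linarith)
  have hlip : ∀ x y, ‖G x - G y‖ ≤ (1 + lam)⁻¹ * ‖x - y‖ := fun x y =>
    calc ‖G x - G y‖ ≤ ‖P₂ (P₁ x) - P₂ (P₁ y)‖ := by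
          rw [hG, hG]
          exact norm_prox_sub_le hlam.le hP₃ _ _
      _ = (1 + lam)⁻¹ * ‖x - y‖ := by
          rw [prox_comp_prox_sub_eq_smul hP₁ hP₂, norm_smul, Real.norm_of_nonneg hc0]
  refine ⟨⟨_, hc0, hc1, hlip⟩, existsUnique_fixedPoint_of_dist_le_mul hc0 hc1 fun x y => ?_⟩
  simpa only [dist_eq_norm] using hlip x y
end

section
/- Define on ℝ² the penalties φ₁(x) = ½(x₁ − 1)², φ₂(x) = ½(x₂ − 1)², φ₃(x) = ½(x₁ + x₂ − 1)², and let (λₖ)ₖ≥₁ be positive step sizes with Σₖ λₖ = ∞ and Σₖ λₖ² < ∞. Then for any initial point x⁽⁰⁾ ∈ ℝ², the cyclic proximal iterates x⁽ᵏ⁺¹⁾ = prox_{λₖφ₃} ∘ prox_{λₖφ₂} ∘ prox_{λₖφ₁}(x⁽ᵏ⁾) converge to x* = (2/3, 2/3), the unique minimizer of F = φ₁ + φ₂ + φ₃. -/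
/-!
Each penalty is half a squared affine residual `½ (⟪a, z⟫ - β)²`, so its proximal map is the
explicit affine map `x ↦ x - (λ (⟪a, x⟫ - β) / (1 + λ ‖a‖²)) • a`. In the coordinates
`s = x₁ + x₂`, `d = x₁ - x₂` one cycle of the three maps decouples into
`(1 + λ) d' = d` and `(1 + λ) (1 + 2λ) (s' - 4/3) = s - 4/3 - (2/3) λ²`.
Both errors `aₖ = |dₖ|` and `aₖ = |sₖ - 4/3|` therefore satisfy
`(1 + λₖ) aₖ₊₁ ≤ aₖ + bₖ` with `∑ bₖ < ∞` (as `∑ λₖ² < ∞`), and since `∑ λₖ = ∞` this forces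
`aₖ → 0`.
-/

open Filter Topology Finset RealInnerProductSpace

theorem tendsto_zero_of_one_add_mul_succ_le {a l b : ℕ → ℝ} (ha : ∀ k, 0 ≤ a k)
    (hl : ∀ k, 0 ≤ l k) (hl_div : ¬ Summable l) (hb : ∀ k, 0 ≤ b k) (hb_sum : Summable b)
    (h : ∀ k, (1 + l k) * a (k + 1) ≤ a k + b k) : Tendsto a atTop (𝓝 0) := by
  -- `d` is nonincreasing and bounded below, so `a = d + ∑ b` converges and `∑ l n a (n+1) < ∞`.
  set d : ℕ → ℝ := fun n => a n - ∑ k ∈ range n, b k with hd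
  have hd_succ : ∀ n, d (n + 1) + l n * a (n + 1) ≤ d n := fun n => by
    simp only [hd, sum_range_succ]; linarith [h n]
  have hd_lower : ∀ n, -∑' k, b k ≤ d n := fun n => by
    linarith [ha n, hb_sum.sum_le_tsum (range n) fun k _ => hb k]
  have hd_anti : Antitone d := antitone_nat_of_succ_le fun n => by
    linarith [hd_succ n, mul_nonneg (hl n) (ha (n + 1))]
  have hsum : Summable fun n => l n * a (n + 1) := by
    refine summable_of_sum_range_le (c := d 0 + ∑' k, b k)
      (fun n => mul_nonneg (hl n) (ha _)) fun n => ?_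
    have : ∑ k ∈ range n, l k * a (k + 1) ≤ d 0 - d n := by
      induction n with
      | zero => simp
      | succ n ih => rw [sum_range_succ]; linarith [hd_succ n]
    linarith [hd_lower n]
  obtain ⟨L, hL⟩ : ∃ L, Tendsto a atTop (𝓝 L) := by
    refine ⟨_, ((tendsto_atTop_ciInf hd_anti ⟨_, Set.forall_mem_range.2 hd_lower⟩).add
      hb_sum.hasSum.tendsto_sum_nat).congr fun n => ?_⟩
    simp only [hd]; ring
  obtain rfl | hL_pos := (ge_of_tendsto' hL ha).eq_or_lt
  · exact hL
  -- a positive limit `L` would give `l n ≤ (2 / L) * l n * a (n + 1)` eventually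
  refine absurd ((hsum.mul_left (2 / L)).of_norm_bounded_eventually_nat ?_) hl_div
  filter_upwards [((tendsto_add_atTop_iff_nat 1).2 hL).eventually
    (lt_mem_nhds (half_lt_self hL_pos))] with n hn
  have h_one : 1 ≤ 2 / L * a (n + 1) := by
    rw [div_mul_eq_mul_div, le_div_iff₀ hL_pos]; linarith
  calc ‖l n‖ = l n * 1 := by rw [Real.norm_of_nonneg (hl n), mul_one]
    _ ≤ l n * (2 / L * a (n + 1)) := mul_le_mul_of_nonneg_left h_one (hl n)
    _ = 2 / L * (l n * a (n + 1)) := by ring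

section InnerProductSpace

variable {E : Type*} [NormedAddCommGroup E] [InnerProductSpace ℝ E]

noncomputable def proxSqResidual (a : E) (β l : ℝ) (x : E) : E :=
  x - (l * (⟪a, x⟫ - β) / (1 + l * ‖a‖ ^ 2)) • a

theorem eq_proxSqResidual_of_forall_le {a x Q : E} {β l : ℝ} (hl : 0 < l) {φ : E → ℝ}
    (hφ : ∀ z, φ z = 1 / 2 * (⟪a, z⟫ - β) ^ 2)
    (hQ : ∀ z, φ Q + 1 / (2 * l) * ‖Q - x‖ ^ 2 ≤ φ z + 1 / (2 * l) * ‖z - x‖ ^ 2) :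
    Q = proxSqResidual a β l x := by
  set c := l * (⟪a, x⟫ - β) / (1 + l * ‖a‖ ^ 2) with hc
  set p := proxSqResidual a β l x
  -- the objective is quadratic with vanishing gradient at `p`
  have hgrowth : ∀ w, φ (p + w) + 1 / (2 * l) * ‖p + w - x‖ ^ 2 =
      φ p + 1 / (2 * l) * ‖p - x‖ ^ 2 + (1 / 2 * ⟪a, w⟫ ^ 2 + 1 / (2 * l) * ‖w‖ ^ 2) := by
    intro w
    have hpx : p - x = -(c • a) := by simp only [p, proxSqResidual, ← hc]; abel
    have hpwx : p + w - x = w - c • a := by rw [add_sub_right_comm, hpx]; abel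
    have hpa : ⟪a, p⟫ = ⟪a, x⟫ - c * ‖a‖ ^ 2 := by
      simp only [p, proxSqResidual, ← hc, inner_sub_right, inner_smul_right,
        real_inner_self_eq_norm_sq]
    have hpos : 0 < 1 + l * ‖a‖ ^ 2 := by positivity
    rw [hφ, hφ, hpwx, hpx, inner_add_right, hpa, norm_neg, norm_sub_sq_real, norm_smul,
      inner_smul_right, real_inner_comm a w, Real.norm_eq_abs, mul_pow, sq_abs, hc]
    field_simp
    ring
  have hle := hQ p
  rw [← add_sub_cancel p Q, hgrowth] at hle
  have : ‖Q - p‖ ^ 2 ≤ 0 := by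
    have := sq_nonneg ⟪a, Q - p⟫
    have : 0 < 1 / (2 * l) := by positivity
    nlinarith
  simpa [sub_eq_zero] using this

end InnerProductSpace

noncomputable def cyclicProx (l : ℝ) (x : EuclideanSpace ℝ (Fin 2)) : EuclideanSpace ℝ (Fin 2) :=
  let e : Fin 2 → EuclideanSpace ℝ (Fin 2) := fun i => EuclideanSpace.single i 1
  proxSqResidual (e 0 + e 1) 1 l (proxSqResidual (e 1) 1 l (proxSqResidual (e 0) 1 l x))

theorem norm_single_add_single_sq :
    ‖EuclideanSpace.single (0 : Fin 2) (1 : ℝ) + EuclideanSpace.single 1 1‖ ^ 2 = 2 := by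
  rw [EuclideanSpace.norm_sq_eq]
  norm_num [Fin.sum_univ_two]

theorem cyclicProx_sub (l : ℝ) (hl : 0 ≤ l) (x : EuclideanSpace ℝ (Fin 2)) :
    (1 + l) * (cyclicProx l x 0 - cyclicProx l x 1) = x 0 - x 1 := by
  have : 1 + l ≠ 0 := by positivity
  simp only [Fin.isValue, cyclicProx, proxSqResidual, EuclideanSpace.inner_single_left,
    Real.ringHom_apply, one_mul, PiLp.norm_single, norm_one, one_pow, mul_one, PiLp.sub_apply,
    PiLp.smul_apply, ne_eq, one_ne_zero, not_false_eq_true, PiLp.single_eq_of_ne, smul_eq_mul,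
    mul_zero, sub_zero, inner_add_left, PiLp.single_eq_same, zero_ne_one,
    norm_single_add_single_sq, smul_add, PiLp.add_apply, add_zero, zero_add,
    sub_sub_sub_cancel_right]
  field_simp
  ring

theorem cyclicProx_add (l : ℝ) (hl : 0 ≤ l) (x : EuclideanSpace ℝ (Fin 2)) :
    (1 + l) * (1 + 2 * l) * (cyclicProx l x 0 + cyclicProx l x 1 - 4 / 3) =
      x 0 + x 1 - 4 / 3 - 2 / 3 * l ^ 2 := by
  have : 1 + l ≠ 0 := by positivity
  have : 1 + l * 2 ≠ 0 := by positivity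
  simp only [Fin.isValue, cyclicProx, proxSqResidual, EuclideanSpace.inner_single_left,
    Real.ringHom_apply, one_mul, PiLp.norm_single, norm_one, one_pow, mul_one, PiLp.sub_apply,
    PiLp.smul_apply, ne_eq, one_ne_zero, not_false_eq_true, PiLp.single_eq_of_ne, smul_eq_mul,
    mul_zero, sub_zero, inner_add_left, PiLp.single_eq_same, zero_ne_one,
    norm_single_add_single_sq, smul_add, PiLp.add_apply, add_zero, zero_add]
  field_simp
  ring

theorem one_add_mul_abs_cyclicProx_sub (l : ℝ) (hl : 0 ≤ l) (x : EuclideanSpace ℝ (Fin 2)) :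
    (1 + l) * |cyclicProx l x 0 - cyclicProx l x 1| = |x 0 - x 1| := by
  rw [← cyclicProx_sub l hl x, abs_mul, abs_of_pos (by positivity : 0 < 1 + l)]

theorem one_add_mul_abs_cyclicProx_add_sub_le (l : ℝ) (hl : 0 ≤ l)
    (x : EuclideanSpace ℝ (Fin 2)) :
    (1 + l) * |cyclicProx l x 0 + cyclicProx l x 1 - 4 / 3| ≤
      |x 0 + x 1 - 4 / 3| + 2 / 3 * l ^ 2 :=
  calc (1 + l) * |cyclicProx l x 0 + cyclicProx l x 1 - 4 / 3|
      ≤ (1 + l) * (1 + 2 * l) * |cyclicProx l x 0 + cyclicProx l x 1 - 4 / 3| := by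
        gcongr
        nlinarith
    _ = |x 0 + x 1 - 4 / 3 - 2 / 3 * l ^ 2| := by
        rw [← cyclicProx_add l hl x, abs_mul,
          abs_of_pos (by positivity : (0 : ℝ) < (1 + l) * (1 + 2 * l))]
    _ ≤ |x 0 + x 1 - 4 / 3| + 2 / 3 * l ^ 2 := by
        have := abs_sub (x 0 + x 1 - 4 / 3) (2 / 3 * l ^ 2)
        rwa [abs_of_nonneg (by positivity : (0 : ℝ) ≤ 2 / 3 * l ^ 2)] at this

theorem tendsto_of_tendsto_add_of_tendsto_sub {α : Type*} {f : Filter α}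
    {x : α → EuclideanSpace ℝ (Fin 2)} {p : EuclideanSpace ℝ (Fin 2)}
    (hadd : Tendsto (fun k => x k 0 + x k 1) f (𝓝 (p 0 + p 1)))
    (hsub : Tendsto (fun k => x k 0 - x k 1) f (𝓝 (p 0 - p 1))) :
    Tendsto x f (𝓝 p) := by
  rw [(PiLp.homeomorph 2 _).isInducing.tendsto_nhds_iff, tendsto_pi_nhds, Fin.forall_fin_two]
  refine ⟨?_, ?_⟩
  · change Tendsto (fun k => x k 0) f (𝓝 (p 0))
    simpa using (hadd.add hsub).div_const 2
  · change Tendsto (fun k => x k 1) f (𝓝 (p 1))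
    simpa using (hadd.sub hsub).div_const 2

/-- For the penalties `φ₁(x) = ½(x₁−1)²`, `φ₂(x) = ½(x₂−1)²`, `φ₃(x) = ½(x₁+x₂−1)²`
on `ℝ²` and positive step sizes `λₖ` with `∑ λₖ = ∞` and `∑ λₖ² < ∞`, the cyclic
proximal iterates `x⁽ᵏ⁺¹⁾ = prox_{λₖφ₃} ∘ prox_{λₖφ₂} ∘ prox_{λₖφ₁}(x⁽ᵏ⁾)` converge
from any initial point to `x* = (2/3, 2/3)`, the unique minimizer of
`F = φ₁ + φ₂ + φ₃`. -/
theorem cyclic_proximal_iterates_converge_to_xstar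
    (φ₁ φ₂ φ₃ : EuclideanSpace ℝ (Fin 2) → ℝ)
    (hφ₁ : ∀ z : EuclideanSpace ℝ (Fin 2), φ₁ z = 1/2 * (z 0 - 1) ^ 2)
    (hφ₂ : ∀ z : EuclideanSpace ℝ (Fin 2), φ₂ z = 1/2 * (z 1 - 1) ^ 2)
    (hφ₃ : ∀ z : EuclideanSpace ℝ (Fin 2), φ₃ z = 1/2 * (z 0 + z 1 - 1) ^ 2)
    -- step sizes
    (lam : ℕ → ℝ) (hlam : ∀ k, 0 < lam k)
    (hdiv : ¬ Summable lam) (hsq : Summable fun k => lam k ^ 2)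
    -- P₁ l, P₂ l, P₃ l are the proximal operators of φ₁, φ₂, φ₃ with parameter l > 0
    (P₁ P₂ P₃ : ℝ → EuclideanSpace ℝ (Fin 2) → EuclideanSpace ℝ (Fin 2))
    (hP₁ : ∀ l : ℝ, 0 < l → ∀ x z : EuclideanSpace ℝ (Fin 2),
      φ₁ (P₁ l x) + 1 / (2 * l) * ‖P₁ l x - x‖ ^ 2 ≤ φ₁ z + 1 / (2 * l) * ‖z - x‖ ^ 2)
    (hP₂ : ∀ l : ℝ, 0 < l → ∀ x z : EuclideanSpace ℝ (Fin 2),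
      φ₂ (P₂ l x) + 1 / (2 * l) * ‖P₂ l x - x‖ ^ 2 ≤ φ₂ z + 1 / (2 * l) * ‖z - x‖ ^ 2)
    (hP₃ : ∀ l : ℝ, 0 < l → ∀ x z : EuclideanSpace ℝ (Fin 2),
      φ₃ (P₃ l x) + 1 / (2 * l) * ‖P₃ l x - x‖ ^ 2 ≤ φ₃ z + 1 / (2 * l) * ‖z - x‖ ^ 2)
    -- the cyclic proximal iteration
    (x : ℕ → EuclideanSpace ℝ (Fin 2))
    (hx : ∀ k : ℕ, x (k + 1) = P₃ (lam k) (P₂ (lam k) (P₁ (lam k) (x k))))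
    (xstar : EuclideanSpace ℝ (Fin 2))
    (hxstar : xstar 0 = 2/3 ∧ xstar 1 = 2/3) :
    Filter.Tendsto x Filter.atTop (nhds xstar) := by
  have hstep : ∀ k, x (k + 1) = cyclicProx (lam k) (x k) := fun k => by
    set e : Fin 2 → EuclideanSpace ℝ (Fin 2) := fun i => EuclideanSpace.single i 1
    have he : ∀ i z, ⟪e i, z⟫ = z i := by simp [e, EuclideanSpace.inner_single_left]
    have hl := hlam k
    rw [hx k, eq_proxSqResidual_of_forall_le hl (a := e 0) (β := 1) (by simp [hφ₁, he])
        (hP₁ _ hl _),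
      eq_proxSqResidual_of_forall_le hl (a := e 1) (β := 1) (by simp [hφ₂, he]) (hP₂ _ hl _),
      eq_proxSqResidual_of_forall_le hl (a := e 0 + e 1) (β := 1)
        (by simp [hφ₃, inner_add_left, he]) (hP₃ _ hl _)]
    rfl
  have hsub : Tendsto (fun k => |x k 0 - x k 1|) atTop (𝓝 0) :=
    tendsto_zero_of_one_add_mul_succ_le (fun _ => abs_nonneg _) (fun k => (hlam k).le) hdiv
      (fun _ => le_rfl) summable_zero fun k => by
        rw [hstep, one_add_mul_abs_cyclicProx_sub _ (hlam k).le, add_zero]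
  have hadd : Tendsto (fun k => |x k 0 + x k 1 - 4 / 3|) atTop (𝓝 0) :=
    tendsto_zero_of_one_add_mul_succ_le (fun _ => abs_nonneg _) (fun k => (hlam k).le) hdiv
      (fun _ => by positivity) (hsq.mul_left (2 / 3)) fun k => by
        rw [hstep]; exact one_add_mul_abs_cyclicProx_add_sub_le _ (hlam k).le _
  refine tendsto_of_tendsto_add_of_tendsto_sub ?_ ?_
  · rw [hxstar.1, hxstar.2, show (2 / 3 + 2 / 3 : ℝ) = 4 / 3 by norm_num,
      ← tendsto_sub_nhds_zero_iff]
    exact (tendsto_zero_iff_abs_tendsto_zero _).2 hadd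
  · rw [hxstar.1, hxstar.2, sub_self]
    exact (tendsto_zero_iff_abs_tendsto_zero _).2 hsub
end
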